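/- arXiv:2505.22958 — 3 statements merged into one kernel-verified Lean document; each statement's English description precedes it below -/
import Mathlib

section
/- Twisted morphisms compose contravariantly over the tree action: for strictly increasing maps f : [p] → [q] and g : [n] → [p] and a Fox-Neuwirth tree Λ ∈ FN_m(n), one has (f∘g)^Λ = f^{gΛ} ∘ g^Λ. -/
/-- The simplicial coface map `d_u`, the strictly increasing map skipping `u`. -/
def cofaceN (u p : ℕ) : ℕ := if p < u then p else p + 1

/-- The simplicial codegeneracy map `s_u`, identifying `u` and `u+1`. -/
def codegN (u x : ℕ) : ℕ := if x ≤ u then x else x - 1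

/-- The data of a Fox–Neuwirth tree: a label permutation `perm` of `{1,…,n}`
(with inverse `inv`) and depth indices `depth k` (for `1 ≤ k ≤ n−1`). -/
structure PreTree where
  perm : ℕ → ℕ
  inv : ℕ → ℕ
  depth : ℕ → ℕ

/-- Well-formedness: `Λ` is a Fox–Neuwirth tree of height `m` on `n` leaves, i.e.
`perm` is a permutation of `{1,…,n}` with two-sided inverse `inv`, and the depth
indices lie in `{0,…,m−1}`. -/
def PreTree.Wf (m n : ℕ) (Λ : PreTree) : Prop :=
  (∀ k, 1 ≤ k → k ≤ n →
    1 ≤ Λ.perm k ∧ Λ.perm k ≤ n ∧ Λ.inv (Λ.perm k) = k ∧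
    1 ≤ Λ.inv k ∧ Λ.inv k ≤ n ∧ Λ.perm (Λ.inv k) = k) ∧
  (∀ k, 1 ≤ k → k + 1 ≤ n → Λ.depth k < m)

/-- The cosimplicial coface action `d_i : FN_m(n) → FN_m(n+1)` on Fox–Neuwirth trees:
`d_0` inserts a new leftmost leaf labeled `1` joined at depth `m−1`; `d_{n+1}` inserts
a new rightmost leaf labeled `n+1` joined at depth `m−1`; an internal `d_i`
(`0 < i < n+1`) doubles the leaf labeled `i`, inserting `i+1` immediately to its right
at depth `m−1` and relabeling larger labels. -/
def coface (m n i : ℕ) (Λ : PreTree) : PreTree :=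
  if i = 0 then
    { perm := fun k => if k = 1 then 1 else Λ.perm (k - 1) + 1
      inv := fun t => if t = 1 then 1 else Λ.inv (t - 1) + 1
      depth := fun k => if k = 1 then m - 1 else Λ.depth (k - 1) }
  else if i = n + 1 then
    { perm := fun k => if k = n + 1 then n + 1 else Λ.perm k
      inv := fun t => if t = n + 1 then n + 1 else Λ.inv t
      depth := fun k => if k = n then m - 1 else Λ.depth k }
  else
    { perm := fun k => if k = Λ.inv i then i else cofaceN i (Λ.perm (codegN (Λ.inv i) k))
      inv := fun t => if t = i then Λ.inv i else cofaceN (Λ.inv i) (Λ.inv (codegN i t))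
      depth := fun k => if k = Λ.inv i then m - 1 else Λ.depth (codegN (Λ.inv i) k) }

/-- `Transforms m n ℓ ψ Λ Γ` : the strictly increasing map `ψ : [n] → [ℓ]` is realized
as a composition of cofaces, and `Γ = ψΛ` is the Fox–Neuwirth tree obtained by applying
the corresponding cofaces to `Λ`. -/
inductive Transforms (m : ℕ) : ℕ → ℕ → (ℕ → ℕ) → PreTree → PreTree → Prop
  | refl (n : ℕ) (Λ : PreTree) : Transforms m n n id Λ Λ
  | step {n ℓ : ℕ} {ψ : ℕ → ℕ} {Λ Γ : PreTree} (k : ℕ) (hk : k ≤ ℓ + 1)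
      (h : Transforms m n ℓ ψ Λ Γ) :
      Transforms m n (ℓ + 1) (fun t => cofaceN k (ψ t)) Λ (coface m ℓ k Γ)

/-- The morphism `ψ` twisted by `Λ`: `ψ^Λ(0) = ψ(0)` and
`ψ^Λ(s) = (σ^{ψΛ})⁻¹(ψ(σ^Λ(s)))` for `s ≥ 1`, where `Γ = ψΛ`. -/
def twisted (ψ : ℕ → ℕ) (Λ Γ : PreTree) : ℕ → ℕ :=
  fun s => if s = 0 then ψ 0 else Γ.inv (ψ (Λ.perm s))

def PermWf (n : ℕ) (Λ : PreTree) : Prop :=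
  ∀ k, 1 ≤ k → k ≤ n →
    1 ≤ Λ.perm k ∧ Λ.perm k ≤ n ∧ Λ.inv (Λ.perm k) = k ∧
    1 ≤ Λ.inv k ∧ Λ.inv k ≤ n ∧ Λ.perm (Λ.inv k) = k

lemma cofaceN_lt {u x : ℕ} (h : x < u) : cofaceN u x = x := if_pos h
lemma cofaceN_ge {u x : ℕ} (h : u ≤ x) : cofaceN u x = x + 1 := if_neg (by omega)
lemma codegN_le {u x : ℕ} (h : x ≤ u) : codegN u x = x := if_pos h
lemma codegN_gt {u x : ℕ} (h : u < x) : codegN u x = x - 1 := if_neg (by omega)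

lemma codeg_cofaceN (i y : ℕ) : codegN i (cofaceN i y) = y := by
  unfold codegN cofaceN; split_ifs <;> omega

lemma cofaceN_ne (i y : ℕ) : cofaceN i y ≠ i := by
  unfold cofaceN; split_ifs <;> omega

lemma cofaceN_codeg (i t : ℕ) (h : t ≠ i) : cofaceN i (codegN i t) = t := by
  unfold codegN cofaceN; split_ifs <;> omega

lemma twisted_zero (ψ : ℕ → ℕ) (Λ Γ : PreTree) : twisted ψ Λ Γ 0 = ψ 0 := by
  simp [twisted]

lemma twisted_pos (ψ : ℕ → ℕ) (Λ Γ : PreTree) (s : ℕ) (hs : s ≠ 0) :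
    twisted ψ Λ Γ s = Γ.inv (ψ (Λ.perm s)) := by
  simp [twisted, hs]

lemma coface_zero_perm (m ℓ : ℕ) (Γ : PreTree) (j : ℕ) :
    (coface m ℓ 0 Γ).perm j = if j = 1 then 1 else Γ.perm (j - 1) + 1 := rfl

lemma coface_zero_inv (m ℓ : ℕ) (Γ : PreTree) (j : ℕ) :
    (coface m ℓ 0 Γ).inv j = if j = 1 then 1 else Γ.inv (j - 1) + 1 := rfl

lemma coface_last_perm (m ℓ : ℕ) (Γ : PreTree) (j : ℕ) :
    (coface m ℓ (ℓ + 1) Γ).perm j = if j = ℓ + 1 then ℓ + 1 else Γ.perm j := by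
  rw [coface, if_neg (Nat.succ_ne_zero ℓ), if_pos rfl]

lemma coface_last_inv (m ℓ : ℕ) (Γ : PreTree) (j : ℕ) :
    (coface m ℓ (ℓ + 1) Γ).inv j = if j = ℓ + 1 then ℓ + 1 else Γ.inv j := by
  rw [coface, if_neg (Nat.succ_ne_zero ℓ), if_pos rfl]

lemma coface_mid_perm (m ℓ i : ℕ) (Γ : PreTree) (h0 : i ≠ 0) (h1 : i ≠ ℓ + 1) (j : ℕ) :
    (coface m ℓ i Γ).perm j =
      if j = Γ.inv i then i else cofaceN i (Γ.perm (codegN (Γ.inv i) j)) := by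
  rw [coface, if_neg h0, if_neg h1]

lemma coface_mid_inv (m ℓ i : ℕ) (Γ : PreTree) (h0 : i ≠ 0) (h1 : i ≠ ℓ + 1) (j : ℕ) :
    (coface m ℓ i Γ).inv j =
      if j = i then Γ.inv i else cofaceN (Γ.inv i) (Γ.inv (codegN i j)) := by
  rw [coface, if_neg h0, if_neg h1]

lemma permWf_coface (m ℓ i : ℕ) (Λ : PreTree) (h : PermWf ℓ Λ) (hi : i ≤ ℓ + 1) :
    PermWf (ℓ + 1) (coface m ℓ i Λ) := by
  by_cases h0 : i = 0
  · subst h0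
    intro k hk1 hk2
    simp only [coface_zero_perm, coface_zero_inv]
    by_cases hk : k = 1
    · subst hk; norm_num
    · obtain ⟨a1, a2, a3, a4, a5, a6⟩ := h (k - 1) (by omega) (by omega)
      rw [if_neg hk, if_neg hk,
        if_neg (show ¬(Λ.perm (k - 1) + 1 = 1) by omega),
        if_neg (show ¬(Λ.inv (k - 1) + 1 = 1) by omega)]
      simp only [Nat.add_sub_cancel]
      exact ⟨by omega, by omega, by rw [a3]; omega, by omega, by omega, by rw [a6]; omega⟩
  · by_cases h1 : i = ℓ + 1
    · subst h1
      intro k hk1 hk2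
      simp only [coface_last_perm, coface_last_inv]
      by_cases hk : k = ℓ + 1
      · subst hk; norm_num
      · obtain ⟨a1, a2, a3, a4, a5, a6⟩ := h k hk1 (by omega)
        rw [if_neg hk, if_neg hk,
          if_neg (show ¬(Λ.perm k = ℓ + 1) by omega),
          if_neg (show ¬(Λ.inv k = ℓ + 1) by omega)]
        exact ⟨a1, by omega, a3, a4, by omega, a6⟩
    · -- internal case
      have hi1 : 1 ≤ i := by omega
      have hi2 : i ≤ ℓ := by omega
      obtain ⟨hb1, hb2, hb3, ha1, ha2, ha3⟩ := h i hi1 hi2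
      set a := Λ.inv i with hadef
      have hP : ∀ k, 1 ≤ k → k ≤ ℓ + 1 →
          1 ≤ (if k = a then i else cofaceN i (Λ.perm (codegN a k))) ∧
          (if k = a then i else cofaceN i (Λ.perm (codegN a k))) ≤ ℓ + 1 ∧
          (if (if k = a then i else cofaceN i (Λ.perm (codegN a k))) = i then a
            else cofaceN a (Λ.inv (codegN i (if k = a then i
              else cofaceN i (Λ.perm (codegN a k)))))) = k := by
        intro k hk1 hk2
        by_cases hka : k = a
        · rw [if_pos hka]
          refine ⟨hi1, by omega, ?_⟩
          rw [if_pos rfl]; omega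
        · rw [if_neg hka]
          have hx1 : 1 ≤ codegN a k := by unfold codegN; split_ifs <;> omega
          have hx2 : codegN a k ≤ ℓ := by unfold codegN; split_ifs <;> omega
          obtain ⟨c1, c2, c3, c4, c5, c6⟩ := h (codegN a k) hx1 hx2
          have hcb : cofaceN i (Λ.perm (codegN a k)) ≤ Λ.perm (codegN a k) + 1 := by
            unfold cofaceN; split_ifs <;> omega
          have hcb' : Λ.perm (codegN a k) ≤ cofaceN i (Λ.perm (codegN a k)) := by
            unfold cofaceN; split_ifs <;> omega
          refine ⟨by omega, by omega, ?_⟩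
          rw [if_neg (cofaceN_ne i _), codeg_cofaceN, c3, cofaceN_codeg a k hka]
      have hQ : ∀ t, 1 ≤ t → t ≤ ℓ + 1 →
          1 ≤ (if t = i then a else cofaceN a (Λ.inv (codegN i t))) ∧
          (if t = i then a else cofaceN a (Λ.inv (codegN i t))) ≤ ℓ + 1 ∧
          (if (if t = i then a else cofaceN a (Λ.inv (codegN i t))) = a then i
            else cofaceN i (Λ.perm (codegN a (if t = i then a
              else cofaceN a (Λ.inv (codegN i t)))))) = t := by
        intro t ht1 ht2
        by_cases hti : t = i
        · rw [if_pos hti]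
          refine ⟨ha1, by omega, ?_⟩
          rw [if_pos rfl]; omega
        · rw [if_neg hti]
          have hz1 : 1 ≤ codegN i t := by unfold codegN; split_ifs <;> omega
          have hz2 : codegN i t ≤ ℓ := by unfold codegN; split_ifs <;> omega
          obtain ⟨c1, c2, c3, c4, c5, c6⟩ := h (codegN i t) hz1 hz2
          have hcb : cofaceN a (Λ.inv (codegN i t)) ≤ Λ.inv (codegN i t) + 1 := by
            unfold cofaceN; split_ifs <;> omega
          have hcb' : Λ.inv (codegN i t) ≤ cofaceN a (Λ.inv (codegN i t)) := by
            unfold cofaceN; split_ifs <;> omega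
          refine ⟨by omega, by omega, ?_⟩
          rw [if_neg (cofaceN_ne a _), codeg_cofaceN, c6, cofaceN_codeg i t hti]
      intro k hk1 hk2
      simp only [coface_mid_perm m ℓ i Λ h0 h1, coface_mid_inv m ℓ i Λ h0 h1, ← hadef]
      obtain ⟨p1, p2, p3⟩ := hP k hk1 hk2
      obtain ⟨q1, q2, q3⟩ := hQ k hk1 hk2
      exact ⟨p1, p2, p3, q1, q2, q3⟩

lemma transforms_bounds {m n ℓ : ℕ} {ψ : ℕ → ℕ} {Λ Γ : PreTree}
    (h : Transforms m n ℓ ψ Λ Γ) : ∀ t, 1 ≤ t → t ≤ n → 1 ≤ ψ t ∧ ψ t ≤ ℓ := by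
  induction h with
  | refl => exact fun t h1 h2 => ⟨h1, h2⟩
  | step k hk h ih =>
    rename_i ℓ' ψ' Λ' Γ'
    intro t h1 h2
    obtain ⟨b1, b2⟩ := ih t h1 h2
    have hb : ψ' t ≤ cofaceN k (ψ' t) ∧ cofaceN k (ψ' t) ≤ ψ' t + 1 := by
      unfold cofaceN; split_ifs <;> omega
    show 1 ≤ cofaceN k (ψ' t) ∧ cofaceN k (ψ' t) ≤ ℓ' + 1
    omega

lemma transforms_permWf {m n ℓ : ℕ} {ψ : ℕ → ℕ} {Λ Γ : PreTree}
    (h : Transforms m n ℓ ψ Λ Γ) : PermWf n Λ → PermWf ℓ Γ := by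
  induction h with
  | refl => exact id
  | step k hk h ih => exact fun hΛ => permWf_coface _ _ _ _ (ih hΛ) hk

lemma transforms_shape {m n ℓ : ℕ} {ψ : ℕ → ℕ} {Λ Γ : PreTree}
    (h : Transforms m n ℓ ψ Λ Γ) : PermWf n Λ →
    ∀ u, u ≤ n → (∀ j, 1 ≤ j → j ≤ u → Λ.perm j = j) →
    ψ u ≤ ℓ ∧ ∀ j, 1 ≤ j → j ≤ ψ u → Γ.perm j = j := by
  induction h with
  | refl Λ => exact fun _ u hu hfix => ⟨hu, hfix⟩
  | step k hk h ih =>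
    rename_i ℓ' ψ' Λ' Γ'
    intro hΛ u hu hfix
    obtain ⟨hle, hfix'⟩ := ih hΛ u hu hfix
    have hwf : PermWf ℓ' Γ' := transforms_permWf h hΛ
    have hcb : ψ' u ≤ cofaceN k (ψ' u) ∧ cofaceN k (ψ' u) ≤ ψ' u + 1 := by
      unfold cofaceN; split_ifs <;> omega
    constructor
    · show cofaceN k (ψ' u) ≤ ℓ' + 1
      omega
    intro j hj1 hj2
    have hj2 : j ≤ cofaceN k (ψ' u) := hj2
    by_cases h0 : k = 0
    · subst h0
      have hj2' : j ≤ ψ' u + 1 := by omega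
      show (coface m ℓ' 0 Γ').perm j = j
      rw [coface_zero_perm]
      by_cases hj : j = 1
      · rw [if_pos hj, hj]
      · rw [if_neg hj, hfix' (j - 1) (by omega) (by omega)]; omega
    · by_cases h1 : k = ℓ' + 1
      · subst h1
        have hj2' : j ≤ ψ' u := by
          rw [cofaceN_lt (by omega : ψ' u < ℓ' + 1)] at hj2; omega
        show (coface m ℓ' (ℓ' + 1) Γ').perm j = j
        rw [coface_last_perm, if_neg (by omega)]
        exact hfix' j hj1 hj2'
      · have hk1 : 1 ≤ k := by omega
        have hk2 : k ≤ ℓ' := by omega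
        obtain ⟨hb1, hb2, hb3, ha1, ha2, ha3⟩ := hwf k hk1 hk2
        show (coface m ℓ' k Γ').perm j = j
        rw [coface_mid_perm m ℓ' k Γ' h0 h1]
        by_cases hcase : ψ' u < k
        · have hj2' : j ≤ ψ' u := by
            rw [cofaceN_lt hcase] at hj2; omega
          have hagt : ψ' u < Γ'.inv k := by
            by_contra hcon
            push_neg at hcon
            have := hfix' (Γ'.inv k) ha1 hcon
            omega
          rw [if_neg (by omega), codegN_le (by omega : j ≤ Γ'.inv k),
            hfix' j hj1 hj2', cofaceN_lt (by omega : j < k)]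
        · push_neg at hcase
          have hj2' : j ≤ ψ' u + 1 := by omega
          have hak : Γ'.inv k = k := by
            have hpk := hfix' k hk1 (by omega)
            calc Γ'.inv k = Γ'.inv (Γ'.perm k) := by rw [hpk]
            _ = k := hb3
          rw [hak]
          by_cases hjk : j = k
          · rw [if_pos hjk, hjk]
          · rw [if_neg hjk]
            by_cases hjlt : j < k
            · rw [codegN_le (by omega : j ≤ k), hfix' j hj1 (by omega),
                cofaceN_lt hjlt]
            · rw [codegN_gt (by omega : k < j),
                hfix' (j - 1) (by omega) (by omega), cofaceN_ge (by omega : k ≤ j - 1)]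
              omega

/-- Twisted morphisms compose contravariantly over the tree action:
`(f ∘ g)^Λ = f^{gΛ} ∘ g^Λ`. -/
theorem twisted_comp (m n p q : ℕ) (g f : ℕ → ℕ) (Λ Γg Γfg : PreTree)
    (hΛ : Λ.Wf m n)
    (hg : Transforms m n p g Λ Γg) (hf : Transforms m p q f Γg Γfg) :
    ∀ s ≤ n, twisted (fun t => f (g t)) Λ Γfg s = twisted f Γg Γfg (twisted g Λ Γg s) := by
  intro s hs
  have hΛ' : PermWf n Λ := hΛ.1
  have hΓg : PermWf p Γg := transforms_permWf hg hΛ'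
  have hΓfg : PermWf q Γfg := transforms_permWf hf hΓg
  by_cases h0 : s = 0
  · subst h0
    rw [twisted_zero, twisted_zero]
    by_cases hg0 : g 0 = 0
    · rw [hg0, twisted_zero]
    · rw [twisted_pos f Γg Γfg (g 0) hg0]
      obtain ⟨hgle, hgfix⟩ := transforms_shape hg hΛ' 0 (Nat.zero_le n)
        (fun j h1 h2 => absurd h2 (by omega))
      obtain ⟨hfle, hffix⟩ := transforms_shape hf hΓg (g 0) hgle hgfix
      rw [hgfix (g 0) (by omega) (le_refl _)]
      have hfb : 1 ≤ f (g 0) ∧ f (g 0) ≤ q := transforms_bounds hf (g 0) (by omega) hgle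
      have h2 : Γfg.perm (f (g 0)) = f (g 0) := hffix (f (g 0)) hfb.1 (le_refl _)
      have h3 : Γfg.inv (Γfg.perm (f (g 0))) = f (g 0) :=
        (hΓfg (f (g 0)) hfb.1 hfb.2).2.2.1
      rw [h2] at h3
      exact h3.symm
  · rw [twisted_pos _ _ _ _ h0, twisted_pos _ _ _ _ h0]
    obtain ⟨p1, p2, p3, _, _, _⟩ := hΛ' s (by omega) hs
    have hx : 1 ≤ g (Λ.perm s) ∧ g (Λ.perm s) ≤ p := transforms_bounds hg (Λ.perm s) p1 p2
    obtain ⟨_, _, _, i1, i2, i3⟩ := hΓg (g (Λ.perm s)) hx.1 hx.2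
    rw [twisted_pos f Γg Γfg _ (by omega), i3]
end

section
/- Shape-Tree Lemma, core statement: let Λ ∈ FN_m(n), ψ : [n] → [ℓ] strictly increasing, and suppose α ∉ im(ψ) with ψ(0) < α < ψ(n). If σ^{ψΛ}(j) = α, then σ^{ψΛ}(j+1) = α+1 and a^{ψΛ}_j = m−1. -/
/-! ### Auxiliary lemmas -/

lemma cofaceN_spec (u a : ℕ) :
    (a < u ∧ cofaceN u a = a) ∨ (u ≤ a ∧ cofaceN u a = a + 1) := by
  unfold cofaceN
  by_cases hc : a < u
  · left; rw [if_pos hc]; exact ⟨hc, rfl⟩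
  · right; rw [if_neg hc]; exact ⟨by omega, rfl⟩

lemma codegN_spec (u x : ℕ) :
    (x ≤ u ∧ codegN u x = x) ∨ (u < x ∧ codegN u x = x - 1) := by
  unfold codegN
  by_cases hc : x ≤ u
  · left; rw [if_pos hc]; exact ⟨hc, rfl⟩
  · right; rw [if_neg hc]; exact ⟨by omega, rfl⟩

lemma cofaceN_ne_s11 (u a : ℕ) : cofaceN u a ≠ u := by
  rcases cofaceN_spec u a with ⟨h, e⟩ | ⟨h, e⟩ <;> omega

lemma le_cofaceN (u a : ℕ) : a ≤ cofaceN u a := by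
  rcases cofaceN_spec u a with ⟨h, e⟩ | ⟨h, e⟩ <;> omega

lemma cofaceN_le_succ (u a : ℕ) : cofaceN u a ≤ a + 1 := by
  rcases cofaceN_spec u a with ⟨h, e⟩ | ⟨h, e⟩ <;> omega

lemma cofaceN_lt_iff {u a b : ℕ} : cofaceN u a < cofaceN u b ↔ a < b := by
  rcases cofaceN_spec u a with ⟨h1, e1⟩ | ⟨h1, e1⟩ <;>
    rcases cofaceN_spec u b with ⟨h2, e2⟩ | ⟨h2, e2⟩ <;> omega

lemma cofaceN_inj {u a b : ℕ} (h : cofaceN u a = cofaceN u b) : a = b := by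
  rcases cofaceN_spec u a with ⟨h1, e1⟩ | ⟨h1, e1⟩ <;>
    rcases cofaceN_spec u b with ⟨h2, e2⟩ | ⟨h2, e2⟩ <;> omega

lemma codegN_cofaceN (u a : ℕ) : codegN u (cofaceN u a) = a := by
  rcases cofaceN_spec u a with ⟨h1, e1⟩ | ⟨h1, e1⟩ <;>
    rcases codegN_spec u (cofaceN u a) with ⟨h2, e2⟩ | ⟨h2, e2⟩ <;> omega

lemma cofaceN_codegN {u a : ℕ} (h : a ≠ u) : cofaceN u (codegN u a) = a := by
  rcases codegN_spec u a with ⟨h1, e1⟩ | ⟨h1, e1⟩ <;>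
    rcases cofaceN_spec u (codegN u a) with ⟨h2, e2⟩ | ⟨h2, e2⟩ <;> omega

lemma codegN_bounds {u x b : ℕ} (h1 : 1 ≤ u) (h2 : u ≤ b) (hx1 : 1 ≤ x)
    (hx2 : x ≤ b + 1) : 1 ≤ codegN u x ∧ codegN u x ≤ b := by
  rcases codegN_spec u x with ⟨hc, e⟩ | ⟨hc, e⟩ <;> omega

/-- The permutation part of well-formedness. -/
def PermPart (n : ℕ) (Λ : PreTree) : Prop :=
  ∀ k, 1 ≤ k → k ≤ n →
    1 ≤ Λ.perm k ∧ Λ.perm k ≤ n ∧ Λ.inv (Λ.perm k) = k ∧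
    1 ≤ Λ.inv k ∧ Λ.inv k ≤ n ∧ Λ.perm (Λ.inv k) = k

lemma coface_permPart {ℓ : ℕ} {Γ : PreTree} (m i : ℕ) (hi : i ≤ ℓ + 1)
    (hP : PermPart ℓ Γ) : PermPart (ℓ + 1) (coface m ℓ i Γ) := by
  by_cases h0 : i = 0
  · subst h0
    have e1 : ∀ x, (coface m ℓ 0 Γ).perm x = if x = 1 then 1 else Γ.perm (x-1) + 1 := by
      intro x; unfold coface; rw [if_pos rfl]
    have e2 : ∀ x, (coface m ℓ 0 Γ).inv x = if x = 1 then 1 else Γ.inv (x-1) + 1 := by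
      intro x; unfold coface; rw [if_pos rfl]
    intro x hx1 hx2
    by_cases hx : x = 1
    · subst hx
      have p1 : (coface m ℓ 0 Γ).perm 1 = 1 := by rw [e1, if_pos rfl]
      have i1 : (coface m ℓ 0 Γ).inv 1 = 1 := by rw [e2, if_pos rfl]
      refine ⟨?_, ?_, ?_, ?_, ?_, ?_⟩ <;> simp only [p1, i1] <;> omega
    · obtain ⟨a1, a2, a3, a4, a5, a6⟩ := hP (x-1) (by omega) (by omega)
      have px : (coface m ℓ 0 Γ).perm x = Γ.perm (x-1) + 1 := by rw [e1, if_neg hx]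
      have ix : (coface m ℓ 0 Γ).inv x = Γ.inv (x-1) + 1 := by rw [e2, if_neg hx]
      have pinv : (coface m ℓ 0 Γ).inv (Γ.perm (x-1) + 1) = x := by
        rw [e2, if_neg (by omega)]
        simp only [Nat.add_sub_cancel]
        rw [a3]; omega
      have ipinv : (coface m ℓ 0 Γ).perm (Γ.inv (x-1) + 1) = x := by
        rw [e1, if_neg (by omega)]
        simp only [Nat.add_sub_cancel]
        rw [a6]; omega
      exact ⟨by rw [px]; omega, by rw [px]; omega, by rw [px]; exact pinv,
        by rw [ix]; omega, by rw [ix]; omega, by rw [ix]; exact ipinv⟩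
  · by_cases hl : i = ℓ + 1
    · subst hl
      have e1 : ∀ x, (coface m ℓ (ℓ+1) Γ).perm x = if x = ℓ+1 then ℓ+1 else Γ.perm x := by
        intro x; unfold coface; rw [if_neg h0, if_pos rfl]
      have e2 : ∀ x, (coface m ℓ (ℓ+1) Γ).inv x = if x = ℓ+1 then ℓ+1 else Γ.inv x := by
        intro x; unfold coface; rw [if_neg h0, if_pos rfl]
      intro x hx1 hx2
      by_cases hx : x = ℓ + 1
      · subst hx
        have p1 : (coface m ℓ (ℓ+1) Γ).perm (ℓ+1) = ℓ+1 := by rw [e1, if_pos rfl]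
        have i1 : (coface m ℓ (ℓ+1) Γ).inv (ℓ+1) = ℓ+1 := by rw [e2, if_pos rfl]
        refine ⟨?_, ?_, ?_, ?_, ?_, ?_⟩ <;> simp only [p1, i1] <;> omega
      · obtain ⟨a1, a2, a3, a4, a5, a6⟩ := hP x hx1 (by omega)
        refine ⟨?_, ?_, ?_, ?_, ?_, ?_⟩
        · rw [e1, if_neg hx]; omega
        · rw [e1, if_neg hx]; omega
        · rw [e1, if_neg hx, e2, if_neg (by omega)]; exact a3
        · rw [e2, if_neg hx]; omega
        · rw [e2, if_neg hx]; omega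
        · rw [e2, if_neg hx, e1, if_neg (by omega)]; exact a6
    · have hi1 : 1 ≤ i := by omega
      have hi2 : i ≤ ℓ := by omega
      obtain ⟨-, -, -, hq1, hq2, hqp⟩ := hP i hi1 hi2
      have e1 : ∀ x, (coface m ℓ i Γ).perm x =
          if x = Γ.inv i then i else cofaceN i (Γ.perm (codegN (Γ.inv i) x)) := by
        intro x; unfold coface; rw [if_neg h0, if_neg hl]
      have e2 : ∀ t, (coface m ℓ i Γ).inv t =
          if t = i then Γ.inv i else cofaceN (Γ.inv i) (Γ.inv (codegN i t)) := by
        intro t; unfold coface; rw [if_neg h0, if_neg hl]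
      intro x hx1 hx2
      have hpb : 1 ≤ (coface m ℓ i Γ).perm x ∧ (coface m ℓ i Γ).perm x ≤ ℓ + 1 := by
        rw [e1]
        by_cases hx : x = Γ.inv i
        · rw [if_pos hx]; omega
        · rw [if_neg hx]
          obtain ⟨hc1, hc2⟩ := codegN_bounds hq1 hq2 hx1 hx2
          obtain ⟨b1, b2, -⟩ := hP _ hc1 hc2
          exact ⟨le_trans b1 (le_cofaceN _ _), le_trans (cofaceN_le_succ _ _) (by omega)⟩
      have hip : (coface m ℓ i Γ).inv ((coface m ℓ i Γ).perm x) = x := by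
        rw [e1]
        by_cases hx : x = Γ.inv i
        · rw [if_pos hx, e2, if_pos rfl]; exact hx.symm
        · rw [if_neg hx, e2, if_neg (cofaceN_ne_s11 _ _), codegN_cofaceN]
          obtain ⟨hc1, hc2⟩ := codegN_bounds hq1 hq2 hx1 hx2
          obtain ⟨-, -, b3, -⟩ := hP _ hc1 hc2
          rw [b3]
          exact cofaceN_codegN hx
      have hib : 1 ≤ (coface m ℓ i Γ).inv x ∧ (coface m ℓ i Γ).inv x ≤ ℓ + 1 := by
        rw [e2]
        by_cases hx : x = i
        · rw [if_pos hx]; omega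
        · rw [if_neg hx]
          obtain ⟨hc1, hc2⟩ := codegN_bounds hi1 hi2 hx1 hx2
          obtain ⟨-, -, -, b4, b5, -⟩ := hP _ hc1 hc2
          exact ⟨le_trans b4 (le_cofaceN _ _), le_trans (cofaceN_le_succ _ _) (by omega)⟩
      have hpi : (coface m ℓ i Γ).perm ((coface m ℓ i Γ).inv x) = x := by
        rw [e2]
        by_cases hx : x = i
        · rw [if_pos hx, e1, if_pos rfl]; exact hx.symm
        · rw [if_neg hx, e1, if_neg (cofaceN_ne_s11 _ _), codegN_cofaceN]
          obtain ⟨hc1, hc2⟩ := codegN_bounds hi1 hi2 hx1 hx2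
          obtain ⟨-, -, -, -, -, b6⟩ := hP _ hc1 hc2
          rw [b6]
          exact cofaceN_codegN hx
      exact ⟨hpb.1, hpb.2, hip, hib.1, hib.2, hpi⟩

lemma transforms_permPart {m n ℓ : ℕ} {ψ : ℕ → ℕ} {Λ Γ : PreTree}
    (h : Transforms m n ℓ ψ Λ Γ) : PermPart n Λ → PermPart ℓ Γ := by
  induction h with
  | refl Λ => exact fun hΛ => hΛ
  | step k hk h ih => exact fun hΛ => coface_permPart m k hk (ih hΛ)

lemma transforms_psi_le {m n ℓ : ℕ} {ψ : ℕ → ℕ} {Λ Γ : PreTree}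
    (h : Transforms m n ℓ ψ Λ Γ) : ∀ t ≤ n, ψ t ≤ ℓ := by
  induction h with
  | refl Λ => exact fun t ht => ht
  | @step ℓ ψ Λ Γ k hk h ih =>
    intro t ht
    exact le_trans (cofaceN_le_succ k (ψ t)) (by have := ih t ht; omega)

lemma core_aux (m : ℕ) {n ℓ : ℕ} {ψ : ℕ → ℕ} {Λ Γ : PreTree}
    (h : Transforms m n ℓ ψ Λ Γ) :
    PermPart n Λ → ∀ α j, ψ 0 < α → α < ψ n → (∀ y ≤ n, ψ y ≠ α) →
    1 ≤ j → j ≤ ℓ → Γ.perm j = α →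
    Γ.perm (j + 1) = α + 1 ∧ Γ.depth j = m - 1 ∧ j + 1 ≤ ℓ := by
  induction h with
  | refl Λ =>
    intro _ α j hα0 hαn hnotim _ _ _
    exact absurd rfl (hnotim α (le_of_lt hαn))
  | @step ℓ ψ Λ Γ k hk h ih =>
    intro hΛ α j hα0 hαn hnotim hj1 hj2 hσ
    have hb0 : cofaceN k (ψ 0) < α := hα0
    have hbn : α < cofaceN k (ψ n) := hαn
    have hbni : ∀ y ≤ n, cofaceN k (ψ y) ≠ α := hnotim
    clear hα0 hαn hnotim
    have hP : PermPart ℓ Γ := transforms_permPart h hΛ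
    by_cases hk0 : k = 0
    · subst hk0
      have e1 : ∀ x, (coface m ℓ 0 Γ).perm x = if x = 1 then 1 else Γ.perm (x-1) + 1 := by
        intro x; unfold coface; rw [if_pos rfl]
      have e2d : ∀ x, (coface m ℓ 0 Γ).depth x = if x = 1 then m - 1 else Γ.depth (x-1) := by
        intro x; unfold coface; rw [if_pos rfl]
      have h2 : ∀ p, cofaceN 0 p = p + 1 := by
        intro p; rcases cofaceN_spec 0 p with ⟨hc, e⟩ | ⟨hc, e⟩ <;> omega
      rw [h2] at hb0
      rw [h2] at hbn
      have hni : ∀ y ≤ n, ψ y ≠ α - 1 := by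
        intro y hy hE
        exact hbni y hy (by rw [h2]; omega)
      rw [e1] at hσ
      have hj' : j ≠ 1 := by intro hE; rw [if_pos hE] at hσ; omega
      rw [if_neg hj'] at hσ
      obtain ⟨c1, c2, c3⟩ := ih hΛ (α-1) (j-1) (by omega) (by omega) hni
        (by omega) (by omega) (by omega)
      have hjj : j - 1 + 1 = j := by omega
      rw [hjj] at c1 c3
      refine ⟨?_, ?_, by omega⟩
      · rw [e1, if_neg (by omega), show j + 1 - 1 = j from by omega, c1]
        omega
      · rw [e2d, if_neg hj']; exact c2
    · by_cases hkl : k = ℓ + 1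
      · subst hkl
        have e1 : ∀ x, (coface m ℓ (ℓ+1) Γ).perm x = if x = ℓ+1 then ℓ+1 else Γ.perm x := by
          intro x; unfold coface; rw [if_neg hk0, if_pos rfl]
        have e2d : ∀ x, (coface m ℓ (ℓ+1) Γ).depth x = if x = ℓ then m - 1 else Γ.depth x := by
          intro x; unfold coface; rw [if_neg hk0, if_pos rfl]
        have h2 : ∀ p, p ≤ ℓ → cofaceN (ℓ+1) p = p := by
          intro p hp; rcases cofaceN_spec (ℓ+1) p with ⟨hc, e⟩ | ⟨hc, e⟩ <;> omega
        have hψ := transforms_psi_le h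
        rw [h2 _ (hψ 0 (Nat.zero_le n))] at hb0
        rw [h2 _ (hψ n le_rfl)] at hbn
        have hni : ∀ y ≤ n, ψ y ≠ α := by
          intro y hy hE
          exact hbni y hy (by rw [h2 _ (hψ y hy)]; exact hE)
        rw [e1] at hσ
        have hjl : j ≠ ℓ + 1 := by
          intro hE; rw [if_pos hE] at hσ
          have := hψ n le_rfl; omega
        rw [if_neg hjl] at hσ
        obtain ⟨c1, c2, c3⟩ := ih hΛ α j hb0 hbn hni hj1 (by omega) hσ
        refine ⟨?_, ?_, by omega⟩
        · rw [e1, if_neg (by omega)]; exact c1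
        · rw [e2d, if_neg (by omega)]; exact c2
      · have hk1 : 1 ≤ k := by omega
        have hk2 : k ≤ ℓ := by omega
        obtain ⟨-, -, -, hq1, hq2, hqp⟩ := hP k hk1 hk2
        have e1 : ∀ x, (coface m ℓ k Γ).perm x =
            if x = Γ.inv k then k else cofaceN k (Γ.perm (codegN (Γ.inv k) x)) := by
          intro x; unfold coface; rw [if_neg hk0, if_neg hkl]
        have e2d : ∀ x, (coface m ℓ k Γ).depth x =
            if x = Γ.inv k then m - 1 else Γ.depth (codegN (Γ.inv k) x) := by
          intro x; unfold coface; rw [if_neg hk0, if_neg hkl]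
        rw [e1] at hσ
        by_cases hjq : j = Γ.inv k
        · rw [if_pos hjq] at hσ
          refine ⟨?_, ?_, by omega⟩
          · rw [e1, if_neg (by omega)]
            have h1 : codegN (Γ.inv k) (j+1) = Γ.inv k := by
              rcases codegN_spec (Γ.inv k) (j+1) with ⟨hc, e⟩ | ⟨hc, e⟩ <;> omega
            rw [h1, hqp]
            rcases cofaceN_spec k k with ⟨hc, e⟩ | ⟨hc, e⟩ <;> omega
          · rw [e2d, if_pos hjq]
        · rw [if_neg hjq] at hσ
          have hαk : α ≠ k := by rw [← hσ]; exact cofaceN_ne_s11 k _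
          obtain ⟨β, hdβ⟩ : ∃ β, cofaceN k β = α := ⟨codegN k α, cofaceN_codegN hαk⟩
          have hσβ : Γ.perm (codegN (Γ.inv k) j) = β := cofaceN_inj (hσ.trans hdβ.symm)
          have hq0 : ψ 0 < β := by
            rw [← hdβ] at hb0; exact cofaceN_lt_iff.mp hb0
          have hqn : β < ψ n := by
            rw [← hdβ] at hbn; exact cofaceN_lt_iff.mp hbn
          have hni : ∀ y ≤ n, ψ y ≠ β := by
            intro y hy hE
            exact hbni y hy (by rw [hE]; exact hdβ)
          obtain ⟨hj'1, hj'2⟩ := codegN_bounds hq1 hq2 hj1 hj2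
          obtain ⟨c1, c2, c3⟩ := ih hΛ β (codegN (Γ.inv k) j) hq0 hqn hni hj'1 hj'2 hσβ
          have hj3 : j ≤ ℓ := by
            rcases codegN_spec (Γ.inv k) j with ⟨hc, e⟩ | ⟨hc, e⟩ <;> omega
          refine ⟨?_, ?_, by omega⟩
          · rw [e1]
            by_cases hj1q : j + 1 = Γ.inv k
            · rw [if_pos hj1q]
              have hcj : codegN (Γ.inv k) j = j := by
                rcases codegN_spec (Γ.inv k) j with ⟨hc, e⟩ | ⟨hc, e⟩ <;> omega
              rw [hcj, hj1q] at c1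
              rw [hqp] at c1
              have hβ2 : cofaceN k β = β := by
                rcases cofaceN_spec k β with ⟨hc, e⟩ | ⟨hc, e⟩ <;> omega
              omega
            · rw [if_neg hj1q]
              have hne : β + 1 ≠ k := by
                intro hE
                have h1 : Γ.inv (Γ.perm (codegN (Γ.inv k) j + 1)) = codegN (Γ.inv k) j + 1 :=
                  (hP (codegN (Γ.inv k) j + 1) (by omega) c3).2.2.1
                rw [c1, hE] at h1
                rcases codegN_spec (Γ.inv k) j with ⟨hc, e⟩ | ⟨hc, e⟩ <;> omega
              have hcj1 : codegN (Γ.inv k) (j+1) = codegN (Γ.inv k) j + 1 := by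
                rcases codegN_spec (Γ.inv k) (j+1) with ⟨hc, e⟩ | ⟨hc, e⟩ <;>
                  rcases codegN_spec (Γ.inv k) j with ⟨hc', e'⟩ | ⟨hc', e'⟩ <;> omega
              rw [hcj1, c1, ← hdβ]
              rcases cofaceN_spec k (β+1) with ⟨hc, e⟩ | ⟨hc, e⟩ <;>
                rcases cofaceN_spec k β with ⟨hc', e'⟩ | ⟨hc', e'⟩ <;> omega
          · rw [e2d, if_neg hjq]; exact c2

/-- Shape-Tree Lemma, core statement: if `α ∉ im ψ`, `ψ(0) < α < ψ(n)` and
`σ^{ψΛ}(j) = α`, then `σ^{ψΛ}(j+1) = α+1` and `a^{ψΛ}_j = m−1`. -/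
theorem shape_tree_core (m n ℓ : ℕ) (ψ : ℕ → ℕ) (Λ Γ : PreTree)
    (hΛ : Λ.Wf m n) (h : Transforms m n ℓ ψ Λ Γ)
    (α j : ℕ) (hα0 : ψ 0 < α) (hαn : α < ψ n)
    (hnotim : ∀ y ≤ n, ψ y ≠ α)
    (hj1 : 1 ≤ j) (hj2 : j ≤ ℓ) (hσ : Γ.perm j = α) :
    Γ.perm (j + 1) = α + 1 ∧ Γ.depth j = m - 1 := by
  have hperm : PermPart n Λ := fun k h1 h2 => hΛ.1 k h1 h2
  obtain ⟨c1, c2, c3⟩ := core_aux m h hperm α j hα0 hαn hnotim hj1 hj2 hσ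
  exact ⟨c1, c2⟩
end

section
/- For a non-singular simplicial set X, the inclusion of the category of elements of the non-degenerate part into the full category of elements has the property that for every simplex x of X, the comma category (elt(X^{nd}))_{/x} has a terminal object, given by the non-degenerate part r(x) with the unique degeneracy operator σ_x satisfying x = σ_x · r(x). -/
/-!
Write `x = σ · z` with `σ` a degeneracy operator and `z` non-degenerate (Eilenberg–Zilber), and
let `s` be a section of `σ`. Given a non-degenerate `y` and `f` with `f · y = x`, the candidate
`g = s ≫ f` satisfies `g · y = s · σ · z = z`, hence `(σ ≫ g) · y = σ · z = f · y`, and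
non-singularity of `y` forces `σ ≫ g = f`. Uniqueness holds because `σ` is epi.
-/

open CategoryTheory Simplicial

/-- A simplex `x ∈ X_n` is non-degenerate: it is not in the image of `X(g)` for any
map `g : [n] → [k]` with `k < n` (equivalently, it is not a degeneracy). -/
def SSet.Nondeg (X : SSet) {n : ℕ} (x : X _⦋n⦌) : Prop :=
  ∀ (k : ℕ), k < n → ∀ (g : (⦋n⦌ : SimplexCategory) ⟶ ⦋k⦌) (y : X _⦋k⦌),
    X.map g.op y ≠ x

/-- A simplicial set is non-singular if the characteristic map `Δⁿ → X` of every
non-degenerate `n`-simplex is injective in every degree. -/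
def SSet.NonSingular (X : SSet) : Prop :=
  ∀ (n : ℕ) (x : X _⦋n⦌), SSet.Nondeg X x →
    ∀ (k : ℕ) (g₁ g₂ : (⦋k⦌ : SimplexCategory) ⟶ ⦋n⦌),
      X.map g₁.op x = X.map g₂.op x → g₁ = g₂

namespace SSet

lemma nondeg_iff_mem_nonDegenerate (X : SSet) {n : ℕ} (x : X _⦋n⦌) :
    X.Nondeg x ↔ x ∈ X.nonDegenerate n := by
  simp [Nondeg, nonDegenerate, degenerate, eq_comm]

lemma exists_epi_nondeg_map_eq (X : SSet) {n : ℕ} (x : X _⦋n⦌) :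
    ∃ (k : ℕ) (σ : (⦋n⦌ : SimplexCategory) ⟶ ⦋k⦌) (z : X _⦋k⦌),
      Epi σ ∧ X.Nondeg z ∧ X.map σ.op z = x := by
  obtain ⟨k, σ, hσ, ⟨z, hz⟩, rfl⟩ := X.exists_nonDegenerate x
  exact ⟨k, σ, z, hσ, (X.nondeg_iff_mem_nonDegenerate z).mpr hz, rfl⟩

lemma NonSingular.existsUnique_factor {X : SSet} (hX : X.NonSingular) {n k j : ℕ}
    {σ : (⦋n⦌ : SimplexCategory) ⟶ ⦋k⦌} [Epi σ] {f : (⦋n⦌ : SimplexCategory) ⟶ ⦋j⦌}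
    {z : X _⦋k⦌} {y : X _⦋j⦌} (hy : X.Nondeg y) (hfy : X.map f.op y = X.map σ.op z) :
    ∃! g : (⦋k⦌ : SimplexCategory) ⟶ ⦋j⦌, X.map g.op y = z ∧ σ ≫ g = f := by
  have : IsSplitEpi σ := isSplitEpi_of_epi σ
  have hgy : X.map (section_ σ ≫ f).op y = z := by
    rw [op_comp, Functor.map_comp_apply, hfy, ← Functor.map_comp_apply, ← op_comp,
      IsSplitEpi.id, op_id, Functor.map_id_apply]
  have hσg : σ ≫ section_ σ ≫ f = f := by
    refine hX j y hy n _ _ ?_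
    rw [op_comp, Functor.map_comp_apply, hgy, hfy]
  exact ⟨section_ σ ≫ f, ⟨hgy, hσg⟩, fun g ⟨_, hg⟩ => (cancel_epi σ).mp (hg.trans hσg.symm)⟩

end SSet

/-- For a non-singular simplicial set `X` and any simplex `x ∈ X_n`, the comma category
of non-degenerate simplices over `x` has a terminal object: the non-degenerate part
`z = r(x)` with its unique degeneracy operator `σ = σ_x` satisfying `x = σ · z`.
Concretely, for every non-degenerate `y ∈ X_j` and `f : [n] → [j]` with `X(f)(y) = x`
there is a unique `g : [k] → [j]` with `X(g)(y) = z` and `σ ≫ g = f`. -/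
theorem nondeg_comma_terminal (X : SSet) (hX : SSet.NonSingular X)
    (n : ℕ) (x : X _⦋n⦌) :
    ∃ (k : ℕ) (σ : (⦋n⦌ : SimplexCategory) ⟶ ⦋k⦌) (z : X _⦋k⦌),
      Epi σ ∧ SSet.Nondeg X z ∧ X.map σ.op z = x ∧
      ∀ (j : ℕ) (f : (⦋n⦌ : SimplexCategory) ⟶ ⦋j⦌) (y : X _⦋j⦌),
        SSet.Nondeg X y → X.map f.op y = x →
        ∃! g : (⦋k⦌ : SimplexCategory) ⟶ ⦋j⦌, X.map g.op y = z ∧ σ ≫ g = f := by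
  obtain ⟨k, σ, z, hσ, hz, rfl⟩ := X.exists_epi_nondeg_map_eq x
  exact ⟨k, σ, z, hσ, hz, rfl, fun j f y hy hfy => hX.existsUnique_factor hy hfy⟩
end
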